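/- Suppose (p*, q*, v*) ∈ S_m minimizes f^M over S_m, and suppose the relaxed constraint is nonnegative at the upper voltage bound for p*, i.e., vmax² + b·vmax + η·p*·Rs ≥ 0. Then g(p*, v*) = 0; that is, the optimal solution of the modified problem PQ-opt-m satisfies the original equality constraint of PQ-opt-o. -/

import Mathlib

/-!
By the intermediate value theorem, `g p* ·` has a root in `[v*, vmax]`; raising the voltage to that
root keeps the point feasible, and since `f^M` strictly decreases in `v`, optimality forces `v*` to
be that root already.
-/

open Set

theorem ContinuousOn.eq_zero_of_roots_le {φ : ℝ → ℝ} {v vmax : ℝ}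
    (hφ : ContinuousOn φ (Icc v vmax)) (hv : v ≤ vmax) (hφv : φ v ≤ 0) (hφvmax : 0 ≤ φ vmax)
    (hroots : ∀ w ∈ Icc v vmax, φ w = 0 → w ≤ v) : φ v = 0 := by
  obtain ⟨w, hw, hφw⟩ := intermediate_value_Icc hv hφ ⟨hφv, hφvmax⟩
  have hwv : w = v := le_antisymm (hroots w hw hφw) hw.1
  rwa [hwv] at hφw

theorem stmt_10_general (ξ Rs η b vmin vmax p₀ q₀ : ℝ)
    (hξ : 0 < ξ)
    (K : Set (ℝ × ℝ))
    (g : ℝ → ℝ → ℝ) (hg : ∀ p v, g p v = v ^ 2 + b * v + η * p * Rs)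
    (fM : ℝ → ℝ → ℝ → ℝ)
    (hfM : ∀ p q v, fM p q v = (p - p₀) ^ 2 + (q - q₀) ^ 2 - ξ * v)
    (Sm : Set (ℝ × ℝ × ℝ))
    (hSm : Sm = {x : ℝ × ℝ × ℝ |
      (x.1, x.2.1) ∈ K ∧ vmin ≤ x.2.2 ∧ x.2.2 ≤ vmax ∧ g x.1 x.2.2 ≤ 0})
    (p' q' v' : ℝ) (hmem : (p', q', v') ∈ Sm)
    (hmin : ∀ x ∈ Sm, fM p' q' v' ≤ fM x.1 x.2.1 x.2.2)
    (hbdry : vmax ^ 2 + b * vmax + η * p' * Rs ≥ 0) :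
    g p' v' = 0 := by
  subst hSm
  obtain ⟨hK, hvmin, hvmax, hgle⟩ := hmem
  have hcont : Continuous (g p') := by
    rw [funext (hg p')]
    fun_prop
  refine hcont.continuousOn.eq_zero_of_roots_le hvmax hgle (by rwa [hg]) fun w hw hgw => ?_
  have hopt := hmin (p', q', w) ⟨hK, hvmin.trans hw.1, hw.2, hgw.le⟩
  simp only [hfM] at hopt
  exact le_of_mul_le_mul_left (by linarith) hξ

/-- Feasibility half of Theorem 2: the minimizer of the penalized objective
f^M over the relaxed feasible set S_m satisfies the original equality
constraint g = 0, given the boundary hypothesis at vmax. -/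
theorem stmt_10 (ξ Rs η b vmin vmax p₀ q₀ : ℝ)
    (hξ : 0 < ξ) (hRs : 0 < Rs) (hη : 0 < η) (hv : vmin ≤ vmax)
    (K : Set (ℝ × ℝ))
    (g : ℝ → ℝ → ℝ) (hg : ∀ p v, g p v = v ^ 2 + b * v + η * p * Rs)
    (fM : ℝ → ℝ → ℝ → ℝ)
    (hfM : ∀ p q v, fM p q v = (p - p₀) ^ 2 + (q - q₀) ^ 2 - ξ * v)
    (Sm : Set (ℝ × ℝ × ℝ))
    (hSm : Sm = {x : ℝ × ℝ × ℝ |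
      (x.1, x.2.1) ∈ K ∧ vmin ≤ x.2.2 ∧ x.2.2 ≤ vmax ∧ g x.1 x.2.2 ≤ 0})
    (p' q' v' : ℝ) (hmem : (p', q', v') ∈ Sm)
    (hmin : ∀ x ∈ Sm, fM p' q' v' ≤ fM x.1 x.2.1 x.2.2)
    (hbdry : vmax ^ 2 + b * vmax + η * p' * Rs ≥ 0) :
    g p' v' = 0 :=
  stmt_10_general ξ Rs η b vmin vmax p₀ q₀ hξ K g hg fM hfM Sm hSm p' q' v' hmem hmin hbdry
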